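/- arXiv:1605.04266 — 3 statements merged into one kernel-verified Lean document; each statement's English description precedes it below -/
import Mathlib

section
/- Let q be an indeterminate and for n ∈ Z set [n] = (q^n − q^{−n})/(q − q^{−1}). For integers λ1, λ2 and y ≥ 1, the identity [λ1 − y]·[λ2 − y] = [λ1]·[λ2] holds if and only if y = λ1 + λ2. -/
/-!
Over the common denominator `(q - q⁻¹)²`, `[a][b] = (q^{a+b} + q^{-a-b}) - (q^{a-b} + q^{b-a})`, and
the second summand is the same on both sides, so the identity says
`q^{s-2y} + q^{2y-s} = q^s + q^{-s}` with `s = λ1 + λ2`. Since `q` is not a root of unity,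
`q^u + q^{-u} = q^v + q^{-v}` forces `u = ±v`, and `y ≥ 1` rules out `u = v`.
-/

namespace Stmt8
noncomputable section

/-- The field ℚ(q). -/
abbrev K : Type := RatFunc ℚ

/-- The indeterminate q. -/
def qq : K := RatFunc.X

/-- The balanced quantum integer [n] = (q^n − q^{−n})/(q − q^{−1}). -/
def qint (n : ℤ) : K := (qq ^ n - qq ^ (-n)) / (qq - qq⁻¹)

end
end Stmt8

namespace RatFunc

variable {F : Type*} [Field F]

theorem intDegree_X_zpow (k : ℤ) : intDegree (X ^ k : RatFunc F) = k := by
  have intDegree_X_pow (n : ℕ) : intDegree (X ^ n : RatFunc F) = n := by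
    rw [← algebraMap_X, ← map_pow, intDegree_polynomial, Polynomial.natDegree_X_pow]
  obtain ⟨n, rfl | rfl⟩ := Int.eq_nat_or_neg k
  · rw [zpow_natCast, intDegree_X_pow]
  · rw [zpow_neg, zpow_natCast, intDegree_inv, intDegree_X_pow]

theorem zpow_X_injective : Function.Injective (X ^ · : ℤ → RatFunc F) := fun a b h => by
  simpa only [intDegree_X_zpow] using congrArg intDegree h

end RatFunc

theorem zpow_add_zpow_neg_eq_iff {F : Type*} [Field F] {x : F}
    (hx : Function.Injective (x ^ · : ℤ → F)) {u v : ℤ} :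
    x ^ u + x ^ (-u) = x ^ v + x ^ (-v) ↔ u = v ∨ u = -v := by
  have hx0 : x ≠ 0 := by
    rintro rfl
    exact absurd (@hx 1 2 (by simp)) (by norm_num)
  have factor : x ^ u + x ^ (-u) - (x ^ v + x ^ (-v)) = (x ^ u - x ^ v) * (1 - x ^ (-u - v)) := by
    simp only [zpow_sub₀ hx0, zpow_neg]
    field_simp
    ring
  rw [← sub_eq_zero, factor, mul_eq_zero, sub_eq_zero, sub_eq_zero, eq_comm (a := (1 : F)),
    hx.eq_iff, hx.eq_iff' (zpow_zero x)]
  omega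

namespace Stmt8

theorem qq_zpow_injective : Function.Injective (qq ^ · : ℤ → K) := RatFunc.zpow_X_injective

theorem qq_sub_inv_ne_zero : qq - qq⁻¹ ≠ 0 := fun h => by
  have := @qq_zpow_injective 1 (-1) (by simpa [sub_eq_zero] using h)
  omega

theorem qint_mul_qint (a b : ℤ) :
    qint a * qint b =
      (qq ^ (a + b) + qq ^ (-(a + b)) - (qq ^ (a - b) + qq ^ (-(a - b)))) / (qq - qq⁻¹) ^ 2 := by
  have hq : qq ≠ 0 := RatFunc.X_ne_zero
  rw [qint, qint, div_mul_div_comm, ← sq]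
  simp only [zpow_add₀ hq, zpow_sub₀ hq, zpow_neg, inv_div]
  ring

/-- For integers λ1, λ2 and y ≥ 1, [λ1−y]·[λ2−y] = [λ1]·[λ2] iff y = λ1 + λ2. -/
theorem stmt8 (l1 l2 y : ℤ) (hy : 1 ≤ y) :
    qint (l1 - y) * qint (l2 - y) = qint l1 * qint l2 ↔ y = l1 + l2 := by
  rw [qint_mul_qint, qint_mul_qint, div_left_inj' (pow_ne_zero 2 qq_sub_inv_ne_zero),
    show l1 - y - (l2 - y) = l1 - l2 by ring, sub_left_inj,
    zpow_add_zpow_neg_eq_iff qq_zpow_injective]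
  omega

end Stmt8
end

section
/- In the quantum group U_q(gl(2|1)) (standard datum: F_1 even, F_2 odd), let λ be a dominant weight with n = ⟨h_1, λ⟩ ≥ 0 and ⟨h_2, λ⟩ = −(n+1), and let V(λ) be the irreducible highest weight module with highest weight vector v_λ. Then for 1 ≤ r ≤ n one has the linear dependence F_2 F_1^{(r)} v_λ = ([n+1−r]/[n+1]) · F_1^{(r)} F_2 v_λ, and [n+1−r]/[n+1] ∈ q^r · 𝒜, where 𝒜 ⊂ Q(q) is the subring of rational functions without pole at q = 0. -/
/-!
Put `w r = F₂ F₁^r v - ([n+1-r]/[n+1]) F₁^r F₂ v`. Every `w r` is killed by `E₂`, and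
`E₁ (w (r+1)) = [r+1][n-r] w r` by the `U_q(sl₂)` formula for `E₁ F₁^(r+1)`. So if `w r = 0`,
then `w (r+1)` is a primitive weight vector. The `F`'s applied to it span a submodule that the
relations make stable under the `E`'s and `K`'s, hence zero or all of `V`; it is not all of `V`,
because its `K₁K₂³`-eigenvalues differ from that of `v` by factors `q^k`, `k ≥ 1`. Hence every
`w r` vanishes. Finally `[n+1-r]/[n+1] = q^r (1 - q^(2(n+1-r))) / (1 - q^(2(n+1)))`.
-/

namespace Stmt13
noncomputable section

abbrev K : Type := RatFunc ℚ
def qq : K := RatFunc.X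
def qint (n : ℤ) : K := (qq ^ n - qq ^ (-n)) / (qq - qq⁻¹)
def qfact (n : ℕ) : K := ∏ c ∈ Finset.range n, qint ((c : ℤ) + 1)

/-- f ∈ 𝒜, i.e. f ∈ ℚ(q) has no pole at q = 0. -/
def NoPole (g : K) : Prop :=
  ∃ a b : Polynomial ℚ, Polynomial.eval 0 b ≠ 0 ∧
    g = algebraMap (Polynomial ℚ) K a / algebraMap (Polynomial ℚ) K b

lemma qq_ne_zero : qq ≠ 0 := RatFunc.X_ne_zero

lemma qq_zpow_injective : Function.Injective (qq ^ · : ℤ → K) := fun a b h => by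
  classical
  simpa [qq] using congrArg (RatFunc.inftyValuation ℚ) h

lemma qq_pow_ne_one {k : ℕ} (hk : k ≠ 0) : qq ^ k ≠ 1 := by
  intro h
  have := @qq_zpow_injective k 0 (by simpa using h)
  omega

lemma qq_sub_inv_ne_zero : qq - qq⁻¹ ≠ 0 := by
  intro h
  have := @qq_zpow_injective 1 (-1) (by simpa [sub_eq_zero] using h)
  omega

lemma qint_ne_zero {m : ℤ} (hm : m ≠ 0) : qint m ≠ 0 :=
  div_ne_zero (sub_ne_zero.mpr fun h => hm (by have := qq_zpow_injective h; omega))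
    qq_sub_inv_ne_zero

lemma qint_neg (m : ℤ) : qint (-m) = -qint m := by
  rw [qint, qint, neg_neg, ← neg_div, neg_sub]

lemma qint_one : qint 1 = 1 := by
  simp [qint, div_self qq_sub_inv_ne_zero]

lemma qint_add_qint_mul_qint (a m : ℤ) :
    qint (m - 2 * a - 2) + qint (a + 1) * qint (m - a) = qint (a + 2) * qint (m - a - 1) := by
  have hq := qq_ne_zero
  have hμ := qq_sub_inv_ne_zero
  have hμ2 : qq ^ 2 - 1 ≠ 0 := sub_ne_zero.mpr (qq_pow_ne_one two_ne_zero)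
  rw [show m - 2 * a - 2 = m - a - a - 2 by ring]
  simp only [qint, zpow_sub₀ hq, zpow_add₀ hq, zpow_neg, zpow_one]
  field_simp
  ring

lemma qint_natCast (k : ℕ) : qint k = (qq ^ (2 * k) - 1) / (qq ^ k * (qq - qq⁻¹)) := by
  have hq := qq_ne_zero
  have hμ := qq_sub_inv_ne_zero
  rw [qint, zpow_neg, zpow_natCast]
  field_simp
  ring

lemma qint_div_qint_add (m r : ℕ) (h : m + r ≠ 0) :
    qint m / qint (m + r) = qq ^ r * ((qq ^ (2 * m) - 1) / (qq ^ (2 * (m + r)) - 1)) := by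
  have hq := qq_ne_zero
  have hμ := qq_sub_inv_ne_zero
  have hden : qq ^ (2 * (m + r)) - 1 ≠ 0 := sub_ne_zero.mpr (qq_pow_ne_one (by omega))
  have hμ2 : qq ^ 2 - 1 ≠ 0 := sub_ne_zero.mpr (qq_pow_ne_one two_ne_zero)
  rw [show ((m : ℤ) + r) = ((m + r : ℕ) : ℤ) by push_cast; ring, qint_natCast, qint_natCast]
  field_simp
  ring

lemma noPole_X_pow_sub_one_div (a : ℕ) {b : ℕ} (hb : b ≠ 0) :
    NoPole ((qq ^ a - 1) / (qq ^ b - 1)) :=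
  ⟨.X ^ a - 1, .X ^ b - 1, by simp [zero_pow hb], by simp [qq]⟩

lemma exists_qint_sub_div_qint_eq_pow_mul (n : ℕ) {r : ℕ} (hr : r ≤ n + 1) :
    ∃ g : K, qint ((n : ℤ) + 1 - r) / qint ((n : ℤ) + 1) = qq ^ r * g ∧ NoPole g := by
  have h := qint_div_qint_add (n + 1 - r) r (by omega)
  rw [show ((n + 1 - r : ℕ) : ℤ) = (n : ℤ) + 1 - r by omega,
    show (n : ℤ) + 1 - r + r = (n : ℤ) + 1 by ring] at h
  exact ⟨_, h, noPole_X_pow_sub_one_div _ (by omega)⟩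

section Eigen

variable {R M : Type*} [CommRing R] [AddCommGroup M] [Module R M]

open Module End

lemma apply_mem_eigenspace_of_mul_eq_smul {T A : End R M} {c μ : R} (h : T * A = c • (A * T))
    {x : M} (hx : x ∈ T.eigenspace μ) : A x ∈ T.eigenspace (c * μ) := by
  rw [mem_eigenspace_iff] at hx ⊢
  rw [← mul_apply, h, LinearMap.smul_apply, mul_apply, hx, map_smul, smul_smul]

lemma pow_apply_mem_eigenspace_of_mul_eq_smul {T A : End R M} {c μ : R}
    (h : T * A = c • (A * T)) {x : M} (hx : x ∈ T.eigenspace μ) (r : ℕ) :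
    (A ^ r) x ∈ T.eigenspace (c ^ r * μ) := by
  induction r with
  | zero => simpa using hx
  | succ r ih =>
    rw [pow_succ' A, mul_apply, pow_succ', mul_assoc]
    exact apply_mem_eigenspace_of_mul_eq_smul h ih

lemma pow_mul_eq_smul_mul {T A : End R M} {c : R} (h : T * A = c • (A * T)) (k : ℕ) :
    T ^ k * A = c ^ k • (A * T ^ k) := by
  induction k with
  | zero => simp
  | succ k ih =>
    rw [pow_succ, mul_assoc, h, mul_smul_comm, ← mul_assoc, ih, smul_mul_assoc, smul_smul,
      mul_assoc, pow_succ']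

def invtClosure (G : Set (End R M)) (w : M) : Submodule R M :=
  sInf {p | w ∈ p ∧ ∀ A ∈ G, p ∈ A.invtSubmodule}

variable {G : Set (End R M)} {w : M}

lemma invtClosure_le {p : Submodule R M} (hw : w ∈ p) (hp : ∀ A ∈ G, p ∈ A.invtSubmodule) :
    invtClosure G w ≤ p :=
  sInf_le ⟨hw, hp⟩

lemma mem_invtClosure_self : w ∈ invtClosure G w :=
  Submodule.mem_sInf.mpr fun _ hp => hp.1

lemma invtClosure_mem_invtSubmodule {A : End R M} (hA : A ∈ G) :
    invtClosure G w ∈ A.invtSubmodule := by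
  refine (mem_invtSubmodule_iff_forall_mem_of_mem A).mpr fun x hx => ?_
  exact Submodule.mem_sInf.mpr fun p hp =>
    (mem_invtSubmodule_iff_forall_mem_of_mem A).mp (hp.2 A hA) x (Submodule.mem_sInf.mp hx p hp)

lemma invtClosure_mem_invtSubmodule_of_commutator {X : End R M} (hX : X w ∈ invtClosure G w)
    (hG : ∀ A ∈ G, ∃ c : R, invtClosure G w ∈ (X * A - c • (A * X)).invtSubmodule) :
    invtClosure G w ∈ X.invtSubmodule := by
  set W := invtClosure G w
  suffices W ≤ W ⊓ W.comap X from fun x hx => (this hx).2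
  refine invtClosure_le ⟨mem_invtClosure_self, hX⟩ fun A hA x ⟨hxW, hXx⟩ => ?_
  obtain ⟨c, hc⟩ := hG A hA
  have hAW := invtClosure_mem_invtSubmodule (w := w) hA
  refine ⟨hAW hxW, ?_⟩
  have : X (A x) = (X * A - c • (A * X)) x + c • A (X x) := by simp
  show X (A x) ∈ W
  rw [this]
  exact W.add_mem (hc hxW) (W.smul_mem c (hAW hXx))

lemma invtClosure_mem_invtSubmodule_of_mul_eq_smul {X : End R M} {c : R} (hX : X w = c • w)
    (hG : ∀ A ∈ G, ∃ c : R, X * A = c • (A * X)) : invtClosure G w ∈ X.invtSubmodule := by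
  refine invtClosure_mem_invtSubmodule_of_commutator ?_ fun A hA => ?_
  · rw [hX]
    exact Submodule.smul_mem _ c mem_invtClosure_self
  · obtain ⟨c, hc⟩ := hG A hA
    exact ⟨c, by simp [hc]⟩

lemma invtClosure_le_iSup_eigenspace {T : End R M} {c μ : R} (hG : ∀ A ∈ G, T * A = c • (A * T))
    (hw : w ∈ T.eigenspace μ) : invtClosure G w ≤ ⨆ k : ℕ, T.eigenspace (c ^ k * μ) := by
  refine invtClosure_le (Submodule.mem_iSup_of_mem 0 (by simpa using hw)) fun A hA => ?_
  refine (mem_invtSubmodule A).mpr (iSup_le fun k x hx => ?_)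
  refine Submodule.mem_iSup_of_mem (k + 1) ?_
  rw [pow_succ', mul_assoc]
  exact apply_mem_eigenspace_of_mul_eq_smul (hG A hA) hx

end Eigen

section Field

variable {𝕜 M : Type*} [Field 𝕜] [AddCommGroup M] [Module 𝕜 M]

open Module End

lemma disjoint_eigenspace_iSup_eigenspace (T : End 𝕜 M) {c μ ν : 𝕜} (h : ∀ k : ℕ, c ^ k * μ ≠ ν) :
    Disjoint (T.eigenspace ν) (⨆ k : ℕ, T.eigenspace (c ^ k * μ)) :=
  (T.eigenspaces_iSupIndep ν).mono_right (iSup_le fun k => le_iSup₂_of_le (c ^ k * μ) (h k) le_rfl)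

lemma apply_eq_inv_smul_of_mul_eq_one {T L : End 𝕜 M} (hLT : L * T = 1) {c : 𝕜} {x : M}
    (hx : T x = c • x) : L x = c⁻¹ • x := by
  have hx' : x = c • L x := by rw [← map_smul, ← hx, ← mul_apply, hLT, one_apply]
  rcases eq_or_ne c 0 with rfl | hc
  · rw [zero_smul] at hx'
    rw [hx', map_zero, smul_zero]
  · rw [hx', smul_smul, inv_mul_cancel₀ hc, one_smul, ← hx']

lemma mul_eq_inv_smul_of_mul_eq_smul {T L A : End 𝕜 M} (hTL : T * L = 1) (hLT : L * T = 1)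
    {c : 𝕜} (hc : c ≠ 0) (h : T * A = c • (A * T)) : L * A = c⁻¹ • (A * L) := by
  have : A * L = c • (L * A) := calc
    A * L = L * (T * A) * L := by rw [← mul_assoc, hLT, one_mul]
    _ = c • (L * A) := by rw [h, mul_smul_comm, smul_mul_assoc, mul_assoc, mul_assoc, hTL,
      mul_one]
  rw [this, smul_smul, inv_mul_cancel₀ hc, one_smul]

end Field

section Sl2

open Module End

variable {V : Type*} [AddCommGroup V] [Module K V]

lemma pow_apply_eq_zpow_smul {X A : End K V} {c d : ℤ} (h : X * A = qq ^ c • (A * X)) {x : V}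
    (hx : X x = qq ^ d • x) (r : ℕ) : X ((A ^ r) x) = qq ^ (c * r + d) • (A ^ r) x := by
  have := pow_apply_mem_eigenspace_of_mul_eq_smul h (mem_eigenspace_iff.mpr hx) r
  rwa [mem_eigenspace_iff, ← zpow_natCast, ← zpow_mul, ← zpow_add₀ qq_ne_zero] at this

lemma inv_sub_smul_sub_apply {Kk L : End K V} (hLK : L * Kk = 1) {k : ℤ} {x : V}
    (hx : Kk x = qq ^ k • x) : ((qq - qq⁻¹)⁻¹ • (Kk - L)) x = qint k • x := by
  rw [LinearMap.smul_apply, LinearMap.sub_apply, hx, apply_eq_inv_smul_of_mul_eq_one hLK hx,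
    ← zpow_neg, ← sub_smul, smul_smul, qint, div_eq_inv_mul]

lemma E_F_pow_succ_apply {E F Kk L : End K V} (hLK : L * Kk = 1)
    (hKF : Kk * F = qq ^ (-2 : ℤ) • (F * Kk)) (hEF : E * F - F * E = (qq - qq⁻¹)⁻¹ • (Kk - L))
    {m : ℤ} {x : V} (hEx : E x = 0) (hKx : Kk x = qq ^ m • x) (r : ℕ) :
    E ((F ^ (r + 1)) x) = (qint (r + 1) * qint (m - r)) • (F ^ r) x := by
  have hstep : ∀ (k : ℤ) (y : V), Kk y = qq ^ k • y → E (F y) = qint k • y + F (E y) :=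
    fun k y hy => by
      rw [← mul_apply, sub_eq_iff_eq_add.mp hEF, LinearMap.add_apply, inv_sub_smul_sub_apply hLK hy]
      rfl
  induction r with
  | zero => simp [hstep m x hKx, hEx, qint_one]
  | succ r ih =>
    rw [pow_succ' F (r + 1), mul_apply,
      hstep _ _ (pow_apply_eq_zpow_smul hKF hKx (r + 1)), ih, map_smul, ← mul_apply, ← pow_succ',
      ← add_smul]
    congr 1
    push_cast
    rw [show -2 * ((r : ℤ) + 1) + m = m - 2 * r - 2 by ring, qint_add_qint_mul_qint,
      show (r : ℤ) + 1 + 1 = r + 2 by ring, show m - ((r : ℤ) + 1) = m - r - 1 by ring]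

end Sl2

/-- The relations of `U_q(gl(2|1))` (`F₁` even, `F₂` odd) that move the `E`'s and `K`'s past
the `F`'s. -/
structure Rep (V : Type*) [AddCommGroup V] [Module K V] where
  (E1 E2 F1 F2 K1 K2 L1 L2 : Module.End K V)
  K1_mul_L1 : K1 * L1 = 1
  L1_mul_K1 : L1 * K1 = 1
  K2_mul_L2 : K2 * L2 = 1
  L2_mul_K2 : L2 * K2 = 1
  K1_mul_F1 : K1 * F1 = qq ^ (-2 : ℤ) • (F1 * K1)
  K1_mul_F2 : K1 * F2 = qq ^ (1 : ℤ) • (F2 * K1)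
  K2_mul_F1 : K2 * F1 = qq ^ (1 : ℤ) • (F1 * K2)
  K2_mul_F2 : K2 * F2 = F2 * K2
  E1_F1_commutator : E1 * F1 - F1 * E1 = (qq - qq⁻¹)⁻¹ • (K1 - L1)
  E2_F2_anticommutator : E2 * F2 + F2 * E2 = (qq - qq⁻¹)⁻¹ • (K2 - L2)
  E1_mul_F2 : E1 * F2 = F2 * E1
  E2_mul_F1 : E2 * F1 = F1 * E2

namespace Rep

open Module End

variable {V : Type*} [AddCommGroup V] [Module K V] (ρ : Rep V)

lemma K2_mul_F2' : ρ.K2 * ρ.F2 = (1 : K) • (ρ.F2 * ρ.K2) := by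
  rw [one_smul, ρ.K2_mul_F2]

/-- Moving `F₁` or `F₂` past `K₁ K₂³` multiplies it by `q`, so on weight vectors its eigenvalue
measures how far below the highest weight they lie. -/
def grading : End K V := ρ.K1 * ρ.K2 ^ 3

lemma grading_mul_F1 : ρ.grading * ρ.F1 = qq • (ρ.F1 * ρ.grading) := by
  rw [grading, mul_assoc, pow_mul_eq_smul_mul ρ.K2_mul_F1, mul_smul_comm, ← mul_assoc,
    ρ.K1_mul_F1, smul_mul_assoc, smul_smul, mul_assoc, ← zpow_natCast, ← zpow_mul,
    ← zpow_add₀ qq_ne_zero]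
  norm_num

lemma grading_mul_F2 : ρ.grading * ρ.F2 = qq • (ρ.F2 * ρ.grading) := by
  rw [grading, mul_assoc, pow_mul_eq_smul_mul ρ.K2_mul_F2', mul_smul_comm, ← mul_assoc,
    ρ.K1_mul_F2, smul_mul_assoc, smul_smul, mul_assoc]
  norm_num

lemma mem_eigenspace_grading {x : V} {a b : K} (h1 : ρ.K1 x = a • x) (h2 : ρ.K2 x = b • x) :
    x ∈ ρ.grading.eigenspace (a * b ^ 3) := by
  simp [grading, pow_succ, h1, h2, smul_smul, mul_comm]

def IsInvariant (W : Submodule K V) : Prop :=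
  ∀ x ∈ W, ρ.E1 x ∈ W ∧ ρ.E2 x ∈ W ∧ ρ.F1 x ∈ W ∧ ρ.F2 x ∈ W ∧
    ρ.K1 x ∈ W ∧ ρ.K2 x ∈ W ∧ ρ.L1 x ∈ W ∧ ρ.L2 x ∈ W

def IsSimple : Prop := ∀ W : Submodule K V, ρ.IsInvariant W → W = ⊥ ∨ W = ⊤

lemma isInvariant_invtClosure {w : V} {a b : K} (hK1w : ρ.K1 w = a • w)
    (hK2w : ρ.K2 w = b • w) (hE1w : ρ.E1 w = 0) (hE2w : ρ.E2 w = 0) :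
    ρ.IsInvariant (invtClosure {ρ.F1, ρ.F2} w) := by
  set W := invtClosure {ρ.F1, ρ.F2} w
  have hqc : ∀ c : ℤ, qq ^ c ≠ 0 := fun c => zpow_ne_zero c qq_ne_zero
  have hF1 : W ∈ ρ.F1.invtSubmodule := invtClosure_mem_invtSubmodule (by simp)
  have hF2 : W ∈ ρ.F2.invtSubmodule := invtClosure_mem_invtSubmodule (by simp)
  have hK1 : W ∈ ρ.K1.invtSubmodule := invtClosure_mem_invtSubmodule_of_mul_eq_smul hK1w
    (by simpa using ⟨⟨_, ρ.K1_mul_F1⟩, ⟨_, ρ.K1_mul_F2⟩⟩)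
  have hK2 : W ∈ ρ.K2.invtSubmodule := invtClosure_mem_invtSubmodule_of_mul_eq_smul hK2w
    (by simpa using ⟨⟨_, ρ.K2_mul_F1⟩, ⟨_, ρ.K2_mul_F2'⟩⟩)
  have hL1 : W ∈ ρ.L1.invtSubmodule := invtClosure_mem_invtSubmodule_of_mul_eq_smul
    (apply_eq_inv_smul_of_mul_eq_one ρ.L1_mul_K1 hK1w) (by simpa using
      ⟨⟨_, mul_eq_inv_smul_of_mul_eq_smul ρ.K1_mul_L1 ρ.L1_mul_K1 (hqc _) ρ.K1_mul_F1⟩,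
        ⟨_, mul_eq_inv_smul_of_mul_eq_smul ρ.K1_mul_L1 ρ.L1_mul_K1 (hqc _) ρ.K1_mul_F2⟩⟩)
  have hL2 : W ∈ ρ.L2.invtSubmodule := invtClosure_mem_invtSubmodule_of_mul_eq_smul
    (apply_eq_inv_smul_of_mul_eq_one ρ.L2_mul_K2 hK2w) (by simpa using
      ⟨⟨_, mul_eq_inv_smul_of_mul_eq_smul ρ.K2_mul_L2 ρ.L2_mul_K2 (hqc _) ρ.K2_mul_F1⟩,
        ⟨_, mul_eq_inv_smul_of_mul_eq_smul ρ.K2_mul_L2 ρ.L2_mul_K2 one_ne_zero ρ.K2_mul_F2'⟩⟩)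
  have hE1 : W ∈ ρ.E1.invtSubmodule := by
    refine invtClosure_mem_invtSubmodule_of_commutator (by rw [hE1w]; exact W.zero_mem) ?_
    simp only [Set.mem_insert_iff, Set.mem_singleton_iff, forall_eq_or_imp, forall_eq]
    refine ⟨⟨1, ?_⟩, ⟨1, by simp [ρ.E1_mul_F2]⟩⟩
    rw [one_smul, ρ.E1_F1_commutator]
    exact fun x hx => W.smul_mem _ (W.sub_mem (hK1 hx) (hL1 hx))
  have hE2 : W ∈ ρ.E2.invtSubmodule := by
    refine invtClosure_mem_invtSubmodule_of_commutator (by rw [hE2w]; exact W.zero_mem) ?_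
    simp only [Set.mem_insert_iff, Set.mem_singleton_iff, forall_eq_or_imp, forall_eq]
    refine ⟨⟨1, by simp [ρ.E2_mul_F1]⟩, ⟨-1, ?_⟩⟩
    rw [neg_smul, one_smul, sub_neg_eq_add, ρ.E2_F2_anticommutator]
    exact fun x hx => W.smul_mem _ (W.sub_mem (hK2 hx) (hL2 hx))
  exact fun x hx => ⟨hE1 hx, hE2 hx, hF1 hx, hF2 hx, hK1 hx, hK2 hx, hL1 hx, hL2 hx⟩

variable {ρ} in
theorem eq_zero_of_E_apply_eq_zero (hsimple : ρ.IsSimple) {v : V} (hv : v ≠ 0) {ν : K}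
    (hvT : v ∈ ρ.grading.eigenspace ν) {w : V} {a b μ : K} (hK1w : ρ.K1 w = a • w)
    (hK2w : ρ.K2 w = b • w) (hwT : w ∈ ρ.grading.eigenspace μ) (hμν : ∀ k : ℕ, qq ^ k * μ ≠ ν)
    (hE1w : ρ.E1 w = 0) (hE2w : ρ.E2 w = 0) : w = 0 := by
  rcases hsimple _ (ρ.isInvariant_invtClosure hK1w hK2w hE1w hE2w) with hW | hW
  · exact (Submodule.mem_bot K).mp (hW ▸ mem_invtClosure_self)
  · have hWT : invtClosure {ρ.F1, ρ.F2} w ≤ ⨆ k : ℕ, ρ.grading.eigenspace (qq ^ k * μ) :=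
      invtClosure_le_iSup_eigenspace (by simpa using ⟨ρ.grading_mul_F1, ρ.grading_mul_F2⟩) hwT
    exact absurd (Submodule.disjoint_def.mp (disjoint_eigenspace_iSup_eigenspace _ hμν) v hvT
      (hWT (hW ▸ Submodule.mem_top))) hv

def defect (n : ℤ) (v : V) (r : ℕ) : V :=
  ρ.F2 ((ρ.F1 ^ r) v) - (qint (n + 1 - r) / qint (n + 1)) • (ρ.F1 ^ r) (ρ.F2 v)

lemma defect_zero {n : ℤ} (hn : n + 1 ≠ 0) (v : V) : ρ.defect n v 0 = 0 := by
  simp [defect, div_self (qint_ne_zero hn)]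

lemma defect_mem_eigenspace {X : End K V} {c₁ c₂ μ : K} (h₁ : X * ρ.F1 = c₁ • (ρ.F1 * X))
    (h₂ : X * ρ.F2 = c₂ • (ρ.F2 * X)) {v : V} (hv : v ∈ X.eigenspace μ) (n : ℤ) (r : ℕ) :
    ρ.defect n v r ∈ X.eigenspace (c₂ * (c₁ ^ r * μ)) := by
  refine sub_mem (apply_mem_eigenspace_of_mul_eq_smul h₂
    (pow_apply_mem_eigenspace_of_mul_eq_smul h₁ hv r)) (Submodule.smul_mem _ _ ?_)
  rw [mul_left_comm]
  exact pow_apply_mem_eigenspace_of_mul_eq_smul h₁ (apply_mem_eigenspace_of_mul_eq_smul h₂ hv) r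

variable {ρ} {n : ℤ} {v : V}

lemma E1_defect_succ (hE1v : ρ.E1 v = 0) (hK1v : ρ.K1 v = qq ^ n • v) (r : ℕ) :
    ρ.E1 (ρ.defect n v (r + 1)) = (qint (r + 1) * qint (n - r)) • ρ.defect n v r := by
  have hE1F2v : ρ.E1 (ρ.F2 v) = 0 := by
    rw [← mul_apply, ρ.E1_mul_F2, mul_apply, hE1v, map_zero]
  have hK1F2v : ρ.K1 (ρ.F2 v) = qq ^ (n + 1) • ρ.F2 v := by
    simpa [add_comm] using pow_apply_eq_zpow_smul ρ.K1_mul_F2 hK1v 1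
  have hv := E_F_pow_succ_apply ρ.L1_mul_K1 ρ.K1_mul_F1 ρ.E1_F1_commutator hE1v hK1v r
  have hF2v := E_F_pow_succ_apply ρ.L1_mul_K1 ρ.K1_mul_F1 ρ.E1_F1_commutator hE1F2v hK1F2v r
  rw [defect, defect, map_sub, map_smul, ← mul_apply, ρ.E1_mul_F2, mul_apply, hv, hF2v, map_smul,
    smul_sub, smul_smul, smul_smul]
  congr 2
  push_cast
  rw [show n + 1 - ((r : ℤ) + 1) = n - r by ring]
  ring

lemma E2_defect (hn : n + 1 ≠ 0) (hE2v : ρ.E2 v = 0) (hK2v : ρ.K2 v = qq ^ (-n - 1) • v)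
    (r : ℕ) : ρ.E2 (ρ.defect n v r) = 0 := by
  have hE2F1 : ∀ y, ρ.E2 ((ρ.F1 ^ r) y) = (ρ.F1 ^ r) (ρ.E2 y) :=
    LinearMap.congr_fun ((Commute.pow_right ρ.E2_mul_F1 r).eq)
  have hE2F2 : ∀ (k : ℤ) (y : V), ρ.K2 y = qq ^ k • y → ρ.E2 y = 0 →
      ρ.E2 (ρ.F2 y) = qint k • y := fun k y hy hE2y => by
    rw [← mul_apply, eq_sub_of_add_eq ρ.E2_F2_anticommutator, LinearMap.sub_apply,
      inv_sub_smul_sub_apply ρ.L2_mul_K2 hy, mul_apply, hE2y, map_zero, sub_zero]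
  rw [defect, map_sub, map_smul, hE2F1, hE2F2 _ v hK2v hE2v,
    hE2F2 _ _ (pow_apply_eq_zpow_smul ρ.K2_mul_F1 hK2v r) (by rw [hE2F1, hE2v, map_zero]),
    map_smul, smul_smul, ← sub_smul, show 1 * (r : ℤ) + (-n - 1) = -(n + 1 - r) by ring,
    show -n - 1 = -(n + 1) by ring, qint_neg, qint_neg, mul_neg,
    div_mul_cancel₀ _ (qint_ne_zero hn), sub_neg_eq_add, neg_add_cancel, zero_smul]

theorem defect_eq_zero (hsimple : ρ.IsSimple) (hn : n + 1 ≠ 0) (hv : v ≠ 0)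
    (hE1v : ρ.E1 v = 0) (hE2v : ρ.E2 v = 0)
    (hK1v : ρ.K1 v = qq ^ n • v) (hK2v : ρ.K2 v = qq ^ (-n - 1) • v) (r : ℕ) :
    ρ.defect n v r = 0 := by
  induction r with
  | zero => exact ρ.defect_zero hn v
  | succ r ih =>
    have hvT := ρ.mem_eigenspace_grading hK1v hK2v
    have hν : qq ^ n * (qq ^ (-n - 1)) ^ 3 ≠ 0 :=
      mul_ne_zero (zpow_ne_zero _ qq_ne_zero) (pow_ne_zero _ (zpow_ne_zero _ qq_ne_zero))
    refine eq_zero_of_E_apply_eq_zero hsimple hv hvT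
      (mem_eigenspace_iff.mp (ρ.defect_mem_eigenspace ρ.K1_mul_F1 ρ.K1_mul_F2
        (mem_eigenspace_iff.mpr hK1v) n (r + 1)))
      (mem_eigenspace_iff.mp (ρ.defect_mem_eigenspace ρ.K2_mul_F1 ρ.K2_mul_F2'
        (mem_eigenspace_iff.mpr hK2v) n (r + 1)))
      (ρ.defect_mem_eigenspace ρ.grading_mul_F1 ρ.grading_mul_F2 hvT n (r + 1)) (fun k h => ?_)
      (by rw [E1_defect_succ hE1v hK1v, ih, smul_zero]) (E2_defect hn hE2v hK2v _)
    refine qq_pow_ne_one (k := k + r + 2) (by omega) (mul_right_cancel₀ hν ?_)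
    linear_combination h

end Rep

theorem stmt13_general
    (V : Type) [AddCommGroup V] [Module K V]
    (E1 E2 F1 F2 K1 K2 L1 L2 : Module.End K V)
    (hK1L1 : K1 * L1 = 1) (hL1K1 : L1 * K1 = 1)
    (hK2L2 : K2 * L2 = 1) (hL2K2 : L2 * K2 = 1)
    (hK1F1 : K1 * F1 = (qq ^ (-2 : ℤ)) • (F1 * K1))
    (hK1F2 : K1 * F2 = (qq ^ (1 : ℤ)) • (F2 * K1))
    (hK2F1 : K2 * F1 = (qq ^ (1 : ℤ)) • (F1 * K2))
    (hK2F2 : K2 * F2 = F2 * K2)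
    (hE1F1 : E1 * F1 - F1 * E1 = (qq - qq⁻¹)⁻¹ • (K1 - L1))
    (hE2F2 : E2 * F2 + F2 * E2 = (qq - qq⁻¹)⁻¹ • (K2 - L2))
    (hE1F2 : E1 * F2 = F2 * E1) (hE2F1 : E2 * F1 = F1 * E2)
    (hsimple : ∀ W : Submodule K V,
      (∀ x ∈ W, E1 x ∈ W ∧ E2 x ∈ W ∧ F1 x ∈ W ∧ F2 x ∈ W ∧
        K1 x ∈ W ∧ K2 x ∈ W ∧ L1 x ∈ W ∧ L2 x ∈ W) → W = ⊥ ∨ W = ⊤)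
    (n : ℕ) (v : V) (hv : v ≠ 0)
    (hE1v : E1 v = 0) (hE2v : E2 v = 0)
    (hK1v : K1 v = (qq ^ (n : ℤ)) • v)
    (hK2v : K2 v = (qq ^ (-(n : ℤ) - 1)) • v) :
    ∀ r : ℕ, 1 ≤ r → r ≤ n →
      (F2 * ((qfact r)⁻¹ • F1 ^ r)) v =
        (qint ((n : ℤ) + 1 - r) / qint ((n : ℤ) + 1)) • ((((qfact r)⁻¹ • F1 ^ r) * F2) v)
      ∧ ∃ g : K, qint ((n : ℤ) + 1 - r) / qint ((n : ℤ) + 1) = qq ^ r * g ∧ NoPole g := by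
  intro r _ hrn
  let ρ : Rep V := ⟨E1, E2, F1, F2, K1, K2, L1, L2, hK1L1, hL1K1, hK2L2, hL2K2, hK1F1, hK1F2,
    hK2F1, hK2F2, hE1F1, hE2F2, hE1F2, hE2F1⟩
  have h := ρ.defect_eq_zero hsimple (by omega) hv hE1v hE2v hK1v hK2v r
  rw [Rep.defect, sub_eq_zero] at h
  refine ⟨?_, exists_qint_sub_div_qint_eq_pow_mul n (by omega)⟩
  simp only [Module.End.mul_apply, LinearMap.smul_apply, map_smul]
  rw [smul_comm]
  exact congrArg _ h

/-- Let V be a ℚ(q)-representation of U_q(gl(2|1)) (operators E₁,E₂,F₁,F₂ and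
invertible K₁,K₂ with inverses L₁,L₂ satisfying the defining relations of
U_q(gl(2|1)) with F₁ even and F₂ odd), which is simple, with a highest weight
vector v of weight λ where n = ⟨h₁,λ⟩ ≥ 0 and ⟨h₂,λ⟩ = −(n+1).  Then for
1 ≤ r ≤ n one has F₂F₁^{(r)}v = ([n+1−r]/[n+1])·F₁^{(r)}F₂v, and
[n+1−r]/[n+1] ∈ q^r·𝒜. -/
theorem stmt13
    (V : Type) [AddCommGroup V] [Module K V]
    (E1 E2 F1 F2 K1 K2 L1 L2 : Module.End K V)
    (hK1L1 : K1 * L1 = 1) (hL1K1 : L1 * K1 = 1)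
    (hK2L2 : K2 * L2 = 1) (hL2K2 : L2 * K2 = 1)
    (hKK : K1 * K2 = K2 * K1)
    (hK1E1 : K1 * E1 = (qq ^ (2 : ℤ)) • (E1 * K1))
    (hK1E2 : K1 * E2 = (qq ^ (-1 : ℤ)) • (E2 * K1))
    (hK2E1 : K2 * E1 = (qq ^ (-1 : ℤ)) • (E1 * K2))
    (hK2E2 : K2 * E2 = E2 * K2)
    (hK1F1 : K1 * F1 = (qq ^ (-2 : ℤ)) • (F1 * K1))
    (hK1F2 : K1 * F2 = (qq ^ (1 : ℤ)) • (F2 * K1))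
    (hK2F1 : K2 * F1 = (qq ^ (1 : ℤ)) • (F1 * K2))
    (hK2F2 : K2 * F2 = F2 * K2)
    (hE1F1 : E1 * F1 - F1 * E1 = (qq - qq⁻¹)⁻¹ • (K1 - L1))
    (hE2F2 : E2 * F2 + F2 * E2 = (qq - qq⁻¹)⁻¹ • (K2 - L2))
    (hE1F2 : E1 * F2 = F2 * E1) (hE2F1 : E2 * F1 = F1 * E2)
    (hF2sq : F2 * F2 = 0) (hE2sq : E2 * E2 = 0)
    (hSerreF : F1 * F1 * F2 - (qq + qq⁻¹) • (F1 * F2 * F1) + F2 * F1 * F1 = 0)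
    (hSerreE : E1 * E1 * E2 - (qq + qq⁻¹) • (E1 * E2 * E1) + E2 * E1 * E1 = 0)
    (hsimple : ∀ W : Submodule K V,
      (∀ x ∈ W, E1 x ∈ W ∧ E2 x ∈ W ∧ F1 x ∈ W ∧ F2 x ∈ W ∧
        K1 x ∈ W ∧ K2 x ∈ W ∧ L1 x ∈ W ∧ L2 x ∈ W) → W = ⊥ ∨ W = ⊤)
    (n : ℕ) (v : V) (hv : v ≠ 0)
    (hE1v : E1 v = 0) (hE2v : E2 v = 0)
    (hK1v : K1 v = (qq ^ (n : ℤ)) • v)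
    (hK2v : K2 v = (qq ^ (-(n : ℤ) - 1)) • v) :
    ∀ r : ℕ, 1 ≤ r → r ≤ n →
      (F2 * ((qfact r)⁻¹ • F1 ^ r)) v =
        (qint ((n : ℤ) + 1 - r) / qint ((n : ℤ) + 1)) • ((((qfact r)⁻¹ • F1 ^ r) * F2) v)
      ∧ ∃ g : K, qint ((n : ℤ) + 1 - r) / qint ((n : ℤ) + 1) = qq ^ r * g ∧ NoPole g :=
  stmt13_general V E1 E2 F1 F2 K1 K2 L1 L2 hK1L1 hL1K1 hK2L2 hL2K2 hK1F1 hK1F2 hK2F1 hK2F2 hE1F1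
    hE2F2 hE1F2 hE2F1 hsimple n v hv hE1v hE2v hK1v hK2v

end
end Stmt13
end

section
/- Let λ = a ε_1 + b ε_2 + c ε_3 ∈ P for quantum gl(2|1) with the non-standard simple system α_1 = ε_1 − ε_3, α_2 = ε_3 − ε_2 (both isotropic, so F_1^2 = F_2^2 = 0), and set λ(i) = ⟨h_i, λ⟩. Then in the Verma module M(λ), a vector of the form c(F_1F_2)^y 1_λ + d(F_2F_1)^y 1_λ with y ≥ 1 and (c,d) ≠ (0,0), c,d both nonzero, is singular (killed by E_1 and E_2) if and only if y = λ(1) + λ(2) and c[λ(2)] = −d[λ(1)]. -/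
/-! On the two weight vectors involved, `E₁` and `E₂` each act by a `1 × 2` matrix, so
singularity is a pair of linear equations in `(c, d)`. For `c, d ≠ 0` they force
`[λ(1) - y][λ(2) - y] = [λ(1)][λ(2)]`. Multiplying by `(q - q⁻¹)²`, both sides become
`q^s + q^(-s) - (q^(λ(1)-λ(2)) + q^(λ(2)-λ(1)))`, with `s = λ(1) + λ(2) - 2y` resp. `λ(1) + λ(2)`;
as `q` has infinite order in `ℚ(q)` this means `s = ±(λ(1) + λ(2))`, i.e. `y = λ(1) + λ(2)`.
Then `[λ(1) - y] = -[λ(2)]` turns either equation into `c[λ(2)] = -d[λ(1)]`. -/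

namespace Stmt19
noncomputable section

abbrev K : Type := RatFunc ℚ
def qq : K := RatFunc.X
def qint (n : ℤ) : K := (qq ^ n - qq ^ (-n)) / (qq - qq⁻¹)

/-- The Verma module M(λ) for the non-standard (two isotropic roots) quantum gl(2|1):
basis F₁^x (F₂F₁)^y F₂^z 1_λ indexed by (x, y, z) ∈ Bool × ℕ × Bool. -/
abbrev V : Type := (Bool × ℕ × Bool) →₀ K

/-- Basis vector F₁^x (F₂F₁)^y F₂^z 1_λ. -/
def bas (t : Bool × ℕ × Bool) : V := Finsupp.single t 1

/-- Action of E₁ on M(λ), where λ(1) = l1: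
E₁ F₁^x(F₂F₁)^y F₂^z 1 = δ_{x,1}[λ(1)−y−z](F₂F₁)^yF₂^z 1
+ δ_{z,0}(−1)^{x+1}[λ(1)]F₁^x(F₂F₁)^{y−1}F₂ 1. -/
def E1a (l1 : ℤ) (v : V) : V :=
  v.sum fun t cc => cc •
    ((if t.1 = true then
        qint (l1 - t.2.1 - (if t.2.2 then 1 else 0)) • bas (false, t.2.1, t.2.2)
      else 0) +
     (if t.2.2 = false ∧ 1 ≤ t.2.1 then
        (((-1 : K) ^ (if t.1 then 2 else 1)) * qint l1) • bas (t.1, t.2.1 - 1, true)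
      else 0))

/-- Action of E₂ on M(λ), where λ(2) = l2:
E₂ F₁^x(F₂F₁)^y F₂^z 1 = δ_{x,0}[λ(2)−y]F₁(F₂F₁)^{y−1}F₂^z 1
+ δ_{z,1}(−1)^x[λ(2)]F₁^x(F₂F₁)^y 1. -/
def E2a (l2 : ℤ) (v : V) : V :=
  v.sum fun t cc => cc •
    ((if t.1 = false ∧ 1 ≤ t.2.1 then
        qint (l2 - t.2.1) • bas (true, t.2.1 - 1, t.2.2)
      else 0) +
     (if t.2.2 = true then
        (((-1 : K) ^ (if t.1 then 1 else 0)) * qint l2) • bas (t.1, t.2.1, false)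
      else 0))

lemma qq_ne_zero : qq ≠ 0 := RatFunc.X_ne_zero

lemma intDegree_qq_zpow (n : ℤ) : (qq ^ n).intDegree = n := by
  have hnat (m : ℕ) : (qq ^ m : K).intDegree = m := by
    rw [qq, ← RatFunc.algebraMap_X, ← map_pow, RatFunc.intDegree_polynomial,
      Polynomial.natDegree_X_pow]
  obtain ⟨m, rfl | rfl⟩ := Int.eq_nat_or_neg n
  · rw [zpow_natCast, hnat]
  · rw [zpow_neg, zpow_natCast, RatFunc.intDegree_inv, hnat]

lemma qq_zpow_injective : Function.Injective fun n : ℤ => qq ^ n := fun a b h => by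
  simpa only [intDegree_qq_zpow] using congrArg RatFunc.intDegree h

lemma qq_sub_inv_ne_zero : qq - qq⁻¹ ≠ 0 := by
  intro h
  have : (1 : ℤ) = -1 := qq_zpow_injective <| by
    simpa only [zpow_one, zpow_neg] using sub_eq_zero.1 h
  omega

lemma qq_zpow_add_zpow_neg_eq_iff (m n : ℤ) :
    qq ^ m + qq ^ (-m) = qq ^ n + qq ^ (-n) ↔ m = n ∨ m = -n := by
  have factor : qq ^ m + qq ^ (-m) - (qq ^ n + qq ^ (-n))
      = qq ^ (-m) * ((qq ^ m - qq ^ n) * (qq ^ m - qq ^ (-n))) := by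
    have hm : (qq ^ m : K) ≠ 0 := zpow_ne_zero _ qq_ne_zero
    have hn : (qq ^ n : K) ≠ 0 := zpow_ne_zero _ qq_ne_zero
    simp only [zpow_neg]
    field_simp
    ring
  rw [← sub_eq_zero, factor, mul_eq_zero, mul_eq_zero, sub_eq_zero, sub_eq_zero,
    qq_zpow_injective.eq_iff, qq_zpow_injective.eq_iff]
  simp [zpow_ne_zero, qq_ne_zero]

lemma qint_neg (n : ℤ) : qint (-n) = -qint n := by
  rw [qint, qint, neg_neg, ← neg_div, neg_sub]

lemma qint_mul_qint (a b : ℤ) :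
    qint a * qint b * (qq - qq⁻¹) ^ 2
      = qq ^ (a + b) + qq ^ (-(a + b)) - (qq ^ (a - b) + qq ^ (-(a - b))) := by
  have hq := qq_ne_zero
  have hD := qq_sub_inv_ne_zero
  rw [qint, qint, div_mul_div_comm, ← sq, div_mul_cancel₀ _ (pow_ne_zero 2 hD)]
  simp only [zpow_add₀ hq, zpow_sub₀ hq, zpow_neg]
  have ha : (qq ^ a : K) ≠ 0 := zpow_ne_zero _ hq
  have hb : (qq ^ b : K) ≠ 0 := zpow_ne_zero _ hq
  field_simp
  ring

lemma qint_sub_mul_qint_sub_eq_iff (a b y : ℤ) :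
    qint (a - y) * qint (b - y) = qint a * qint b ↔ y = 0 ∨ y = a + b := by
  rw [← mul_left_inj' (pow_ne_zero 2 qq_sub_inv_ne_zero), qint_mul_qint, qint_mul_qint,
    show a - y - (b - y) = a - b by ring, sub_left_inj, qq_zpow_add_zpow_neg_eq_iff]
  omega

lemma E1a_single_add_single (l1 : ℤ) {y : ℕ} (hy : 1 ≤ y) (c d : K) :
    E1a l1 (Finsupp.single (true, y - 1, true) c + Finsupp.single (false, y, false) d)
      = Finsupp.single (false, y - 1, true) (c * qint (l1 - y) - d * qint l1) := by
  rw [E1a, ← Finsupp.linearCombination_apply, map_add, Finsupp.linearCombination_single,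
    Finsupp.linearCombination_single]
  simp only [↓reduceIte, hy, Nat.cast_sub, Nat.cast_one, bas, Finsupp.smul_single, smul_eq_mul,
    mul_one, Bool.true_eq_false, false_and, add_zero, Bool.false_eq_true, and_self, pow_one,
    neg_mul, one_mul, neg_smul, zero_add, smul_neg, Finsupp.single_sub]
  rw [show l1 - ((y : ℤ) - 1) - 1 = l1 - y by ring]
  abel

lemma E2a_single_add_single (l2 : ℤ) {y : ℕ} (hy : 1 ≤ y) (c d : K) :
    E2a l2 (Finsupp.single (true, y - 1, true) c + Finsupp.single (false, y, false) d)
      = Finsupp.single (true, y - 1, false) (d * qint (l2 - y) - c * qint l2) := by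
  rw [E2a, ← Finsupp.linearCombination_apply, map_add, Finsupp.linearCombination_single,
    Finsupp.linearCombination_single]
  simp only [Bool.true_eq_false, false_and, ↓reduceIte, pow_one, neg_mul, one_mul, bas, neg_smul,
    Finsupp.smul_single, smul_eq_mul, mul_one, zero_add, smul_neg, hy, and_self,
    Bool.false_eq_true, add_zero, Finsupp.single_sub]
  abel

lemma qint_equations_iff (l1 l2 y : ℤ) (hy : y ≠ 0) {c d : K} (hc : c ≠ 0) (hd : d ≠ 0) :
    (c * qint (l1 - y) = d * qint l1 ∧ d * qint (l2 - y) = c * qint l2)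
      ↔ (y = l1 + l2 ∧ c * qint l2 = -(d * qint l1)) := by
  constructor
  · rintro ⟨h1, h2⟩
    have hprod : qint (l1 - y) * qint (l2 - y) = qint l1 * qint l2 := by
      refine mul_left_cancel₀ (mul_ne_zero hc hd) ?_
      linear_combination d * qint (l2 - y) * h1 + d * qint l1 * h2
    obtain rfl : y = l1 + l2 := ((qint_sub_mul_qint_sub_eq_iff l1 l2 y).1 hprod).resolve_left hy
    rw [show l1 - (l1 + l2) = -l2 by ring, qint_neg] at h1
    exact ⟨rfl, by linear_combination -h1⟩
  · rintro ⟨rfl, h⟩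
    rw [show l1 - (l1 + l2) = -l2 by ring, show l2 - (l1 + l2) = -l1 by ring, qint_neg, qint_neg]
    exact ⟨by linear_combination -h, by linear_combination -h⟩

/-- `(F₁F₂)^y = F₁(F₂F₁)^{y−1}F₂` corresponds to the basis index `(true, y−1, true)`
and `(F₂F₁)^y` to `(false, y, false)`. -/
theorem stmt19 (l1 l2 : ℤ) (y : ℕ) (hy : 1 ≤ y) (c d : K) (hc : c ≠ 0) (hd : d ≠ 0) :
    (E1a l1 (Finsupp.single (true, y - 1, true) c + Finsupp.single (false, y, false) d) = 0 ∧
     E2a l2 (Finsupp.single (true, y - 1, true) c + Finsupp.single (false, y, false) d) = 0)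
    ↔ ((y : ℤ) = l1 + l2 ∧ c * qint l2 = -(d * qint l1)) := by
  rw [E1a_single_add_single l1 hy, E2a_single_add_single l2 hy, Finsupp.single_eq_zero,
    Finsupp.single_eq_zero, sub_eq_zero, sub_eq_zero]
  exact qint_equations_iff l1 l2 y (by omega) hc hd

end
end Stmt19
end
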